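/- arXiv:1711.01146 — 2 statements merged into one kernel-verified Lean document; each statement's English description precedes it below -/
import Mathlib

section
/- In the Coxeter complex of a finite Coxeter group W, a coset W_J x is contained in the fixed hyperplane H_t of a reflection t (meaning W_J x t = W_J x) if and only if the support of t^{x^{-1}} = x t x^{-1} is contained in J. -/
open CoxeterSystem

variable {B W : Type*} [Group W] {M : CoxeterMatrix B}

/-- The support of `w`: the set of indices of simple reflections appearing in some reduced
expression of `w`. -/
def CoxeterSystem.support (cs : CoxeterSystem M W) (w : W) : Set B :=
  {i | ∃ ω : List B, cs.IsReduced ω ∧ cs.wordProd ω = w ∧ i ∈ ω}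

/-- The face `W_J x` of the Coxeter complex: the right coset of the standard parabolic
subgroup `W_J`, viewed as a subset of `W`. -/
def CoxeterSystem.coset (cs : CoxeterSystem M W) (J : Set B) (x : W) : Set W :=
  (fun w => w * x) '' (Subgroup.closure (cs.simple '' J) : Set W)

/-!
Right multiplication by `t` sends `W_J x` to `W_J x t`, so `W_J x t = W_J x` iff
`x t x⁻¹ ∈ W_J`, and it remains to show that `w ∈ W_J` iff every reduced word of `w` has all its
letters in `J`. For the hard direction, let `c` be the last letter of a reduced word of `w ∈ W_J`.
Since `ℓ (w s_c) < ℓ w`, the strong exchange condition says that `s_c` occurs in the right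
inversion sequence of every word for `w`, in particular of a word with letters in `J`; hence
`s_c ∈ W_J`, and then `c ∈ J` by the deletion condition and the injectivity of `i ↦ s_i`.

The strong exchange condition comes from Tits' representation of `W` on `W × ℤ/2`, which counts
mod 2 how often a word crosses a given reflection; injectivity of `i ↦ s_i` comes from the
geometric representation, where `σ_a σ_b` acts on `span {e_a, e_b}` as a rotation by `2π / m_ab`.
-/

open MulOpposite Pointwise in
theorem Subgroup.image_mul_right_image_mul_right_eq_iff {G : Type*} [Group G] (H : Subgroup G)
    (x t : G) : (· * t) '' ((· * x) '' (H : Set G)) = (· * x) '' H ↔ x * t * x⁻¹ ∈ H := by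
  have hop : ∀ y : G, (· * y) '' (H : Set G) = op y • (H : Set G) := fun y => by
    rw [← Set.image_smul]
    rfl
  rw [Set.image_image, show (fun w => w * x * t) = (· * (x * t)) from funext (mul_assoc · x t),
    hop, hop, rightCoset_eq_iff, ← inv_mem_iff]
  simp [mul_assoc]

namespace CoxeterMatrix

open Finsupp

variable (M)

/-- `⟨e_a, e_b⟩ = -cos (π / m_ab)`. For `m_ab = 0`, i.e. `m_ab = ∞`, the junk value `π / 0 = 0`
gives the correct entry `-1`. -/
noncomputable def cosForm (a b : B) : ℝ := -Real.cos (Real.pi / M a b)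

lemma cosForm_self (a : B) : M.cosForm a a = 1 := by
  simp [cosForm]

lemma cosForm_comm (a b : B) : M.cosForm a b = M.cosForm b a := by
  rw [cosForm, cosForm, M.symmetric]

noncomputable def cosFormLeft (a : B) : (B →₀ ℝ) →ₗ[ℝ] ℝ :=
  linearCombination ℝ (M.cosForm a)

@[simp]
lemma cosFormLeft_single (a b : B) : M.cosFormLeft a (single b 1) = M.cosForm a b := by
  simp [cosFormLeft]

noncomputable def geomReflection (a : B) : Module.End ℝ (B →₀ ℝ) :=
  LinearMap.id - (2 : ℝ) • (M.cosFormLeft a).smulRight (single a 1)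

lemma geomReflection_apply (a : B) (v : B →₀ ℝ) :
    M.geomReflection a v = v - (2 * M.cosFormLeft a v) • single a 1 := by
  simp [geomReflection]

lemma cosFormLeft_geomReflection (a b : B) (v : B →₀ ℝ) :
    M.cosFormLeft a (M.geomReflection b v) =
      M.cosFormLeft a v - 2 * M.cosFormLeft b v * M.cosForm a b := by
  rw [geomReflection_apply, map_sub, map_smul, cosFormLeft_single, smul_eq_mul]

lemma geomReflection_mul_self (a : B) : M.geomReflection a * M.geomReflection a = 1 := by
  refine LinearMap.ext fun v => ?_
  rw [Module.End.mul_apply, geomReflection_apply _ _ (M.geomReflection a v),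
    cosFormLeft_geomReflection, cosForm_self, geomReflection_apply]
  simp only [Module.End.one_apply]
  module

section Dihedral

variable {a b : B}

local notation "P" => M.geomReflection a * M.geomReflection b

lemma geomReflection_mul_apply_sub_mem_span (v : B →₀ ℝ) :
    P v - v ∈ Submodule.span ℝ {single a 1, single b 1} := by
  refine Submodule.mem_span_pair.mpr
    ⟨-(2 * M.cosFormLeft a (M.geomReflection b v)), -(2 * M.cosFormLeft b v), ?_⟩
  rw [Module.End.mul_apply, geomReflection_apply _ a, geomReflection_apply _ b]
  module

lemma geomReflection_mul_pow_apply_sub_mem_span (k : ℕ) (v : B →₀ ℝ) :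
    (P ^ k) v - v ∈ Submodule.span ℝ {single a 1, single b 1} := by
  induction k with
  | zero => simp
  | succ k ih =>
    rw [pow_succ', Module.End.mul_apply, ← sub_add_sub_cancel _ ((P ^ k) v)]
    exact Submodule.add_mem _ (M.geomReflection_mul_apply_sub_mem_span _) ih

lemma cosFormLeft_geomReflection_mul_apply_left (u : B →₀ ℝ) :
    M.cosFormLeft a (P u) = -M.cosFormLeft a u + 2 * M.cosForm a b * M.cosFormLeft b u := by
  rw [Module.End.mul_apply, cosFormLeft_geomReflection, cosFormLeft_geomReflection, cosForm_self]
  ring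

lemma cosFormLeft_geomReflection_mul_apply_right (u : B →₀ ℝ) :
    M.cosFormLeft b (P u) = -M.cosFormLeft b u - 2 * M.cosForm a b * M.cosFormLeft a u +
      4 * M.cosForm a b ^ 2 * M.cosFormLeft b u := by
  rw [Module.End.mul_apply, cosFormLeft_geomReflection, cosFormLeft_geomReflection,
    cosFormLeft_geomReflection, cosForm_self, cosForm_comm M b a]
  ring

/-- For a root `E` of `X² + 2 ⟨e_a, e_b⟩ X + 1`, the quantity `⟨e_a, v⟩ + E ⟨e_b, v⟩` is an
eigenvector of `P` with eigenvalue `E²`. -/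
lemma cosFormLeft_pow_apply {E : ℂ} (hE : E ^ 2 + 2 * M.cosForm a b * E + 1 = 0)
    (v : B →₀ ℝ) (k : ℕ) :
    (M.cosFormLeft a ((P ^ k) v) : ℂ) + E * M.cosFormLeft b ((P ^ k) v) =
      E ^ (2 * k) * (M.cosFormLeft a v + E * M.cosFormLeft b v) := by
  induction k with
  | zero => simp
  | succ k ih =>
    rw [pow_succ', Module.End.mul_apply, cosFormLeft_geomReflection_mul_apply_left,
      cosFormLeft_geomReflection_mul_apply_right]
    push_cast
    linear_combination
      (-(M.cosFormLeft a ((P ^ k) v) : ℂ) - (E - 2 * M.cosForm a b) * M.cosFormLeft b ((P ^ k) v))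
        * hE + E ^ 2 * ih

lemma eq_zero_of_mem_span_of_cosFormLeft_eq_zero (hc : M.cosForm a b ^ 2 ≠ 1) {w : B →₀ ℝ}
    (hw : w ∈ Submodule.span ℝ {single a 1, single b 1}) (ha : M.cosFormLeft a w = 0)
    (hb : M.cosFormLeft b w = 0) : w = 0 := by
  obtain ⟨A, C, rfl⟩ := Submodule.mem_span_pair.mp hw
  simp only [map_add, map_smul, cosFormLeft_single, cosForm_self, cosForm_comm M b a,
    smul_eq_mul] at ha hb
  have hc' : 1 - M.cosForm a b ^ 2 ≠ 0 := sub_ne_zero.mpr hc.symm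
  have hA : A = 0 := (mul_eq_zero.mp (by linear_combination ha - M.cosForm a b * hb :
    A * (1 - M.cosForm a b ^ 2) = 0)).resolve_right hc'
  have hC : C = 0 := (mul_eq_zero.mp (by linear_combination hb - M.cosForm a b * ha :
    C * (1 - M.cosForm a b ^ 2) = 0)).resolve_right hc'
  simp [hA, hC]

lemma geomReflection_mul_pow (hm : 2 ≤ M a b) : P ^ M a b = 1 := by
  set θ := Real.pi / M a b with hθ
  have hm₀ : (0 : ℝ) < M a b := by positivity
  have hsin : Real.sin θ ≠ 0 := (Real.sin_pos_of_pos_of_lt_pi (by positivity)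
    (div_lt_self Real.pi_pos (by exact_mod_cast hm))).ne'
  set E : ℂ := Complex.cos θ + Complex.sin θ * Complex.I
  have hE : E ^ 2 + 2 * M.cosForm a b * E + 1 = 0 := by
    rw [cosForm, ← hθ]
    push_cast
    linear_combination Complex.sin θ ^ 2 * Complex.I_sq - Complex.sin_sq_add_cos_sq (θ : ℂ)
  have hEm : E ^ (2 * M a b) = 1 := by
    rw [Complex.cos_add_sin_mul_I_pow,
      show ((2 * M a b : ℕ) : ℂ) * θ = 2 * Real.pi by
        push_cast [hθ]; field_simp [show (M a b : ℂ) ≠ 0 by exact_mod_cast hm₀.ne']]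
    simp
  refine LinearMap.ext fun v => ?_
  have hz := M.cosFormLeft_pow_apply hE v (M a b)
  rw [hEm, one_mul] at hz
  have him := congrArg Complex.im hz
  have hre := congrArg Complex.re hz
  simp only [E, ← Complex.ofReal_cos, ← Complex.ofReal_sin, Complex.add_im, Complex.ofReal_im,
    Complex.mul_im, Complex.add_re, Complex.ofReal_re, Complex.mul_re, Complex.I_re, mul_zero,
    Complex.I_im, mul_one, sub_self, add_zero, zero_add, mul_eq_mul_left_iff, sub_zero] at him hre
  have hb : M.cosFormLeft b ((P ^ M a b) v) = M.cosFormLeft b v := him.resolve_right hsin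
  rw [hb] at hre
  rw [Module.End.one_apply]
  refine sub_eq_zero.mp (M.eq_zero_of_mem_span_of_cosFormLeft_eq_zero ?_
    (M.geomReflection_mul_pow_apply_sub_mem_span _ v) ?_ ?_)
  · rw [cosForm, ← hθ, neg_sq, Real.cos_sq']
    simpa using hsin
  · rw [map_sub, add_right_cancel hre, sub_self]
  · rw [map_sub, hb, sub_self]

end Dihedral

theorem isLiftable_geomReflection : M.IsLiftable M.geomReflection := by
  intro a b
  obtain h | h | h : M a b = 0 ∨ M a b = 1 ∨ 2 ≤ M a b := by omega
  · rw [h, pow_zero]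
  · obtain rfl : a = b := by_contra fun hab => M.off_diagonal a b hab h
    rw [h, pow_one, geomReflection_mul_self]
  · exact M.geomReflection_mul_pow h

end CoxeterMatrix

namespace CoxeterSystem

variable (cs : CoxeterSystem M W)

local prefix:100 "s" => cs.simple
local prefix:100 "π" => cs.wordProd
local prefix:100 "ℓ" => cs.length
local prefix:100 "ris" => cs.rightInvSeq

theorem simple_injective : Function.Injective cs.simple := by
  intro i j hij
  by_contra hne
  have h := congrArg (cs.lift ⟨M.geomReflection, M.isLiftable_geomReflection⟩) hij
  rw [cs.lift_apply_simple, cs.lift_apply_simple] at h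
  have hi := DFunLike.congr_fun (LinearMap.congr_fun h (Finsupp.single i 1)) i
  simp [CoxeterMatrix.geomReflection_apply, CoxeterMatrix.cosForm_self,
    Finsupp.single_eq_of_ne hne] at hi

open scoped Classical

/-- The generator `s i` of Tits' permutation representation on `W × ℤ/2`, which records in the
second coordinate the parity of the number of times a reflection is crossed. -/
noncomputable def reflParityPerm (i : B) : Equiv.Perm (W × ZMod 2) :=
  Function.Involutive.toPerm (fun p => (s i * p.1 * s i, p.2 + if p.1 = s i then 1 else 0)) <| by
    rintro ⟨x, _⟩
    have hconj : s i * x * s i = s i ↔ x = s i := by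
      constructor <;> intro h
      · simpa [mul_assoc] using congrArg (fun y => s i * y * s i) h
      · simp [h]
    ext
    · simp [mul_assoc]
    · simp only [hconj, add_assoc, CharTwo.add_self_eq_zero, add_zero]

lemma reflParityPerm_apply (i : B) (p : W × ZMod 2) :
    cs.reflParityPerm i p = (s i * p.1 * s i, p.2 + if p.1 = s i then 1 else 0) :=
  rfl

lemma prod_map_reflParityPerm (ω : List B) (p : W × ZMod 2) :
    (ω.map cs.reflParityPerm).prod p =
      (π ω * p.1 * (π ω)⁻¹, p.2 + ((ris ω).count p.1 : ZMod 2)) := by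
  induction ω with
  | nil => simp
  | cons i ω ih =>
    have hconj : π ω * p.1 * (π ω)⁻¹ = s i ↔ (π ω)⁻¹ * s i * π ω = p.1 := by
      constructor <;> intro h <;> rw [← h] <;> group
    rw [List.map_cons, List.prod_cons, Equiv.Perm.mul_apply, ih]
    ext
    · simp [reflParityPerm_apply, wordProd_cons, mul_assoc]
    · simp [reflParityPerm_apply, rightInvSeq, List.count_cons, hconj, add_assoc]

lemma alternatingWord_two_mul_succ (i j : B) (n : ℕ) :
    alternatingWord i j (2 * (n + 1)) = i :: j :: alternatingWord i j (2 * n) := by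
  rw [show 2 * (n + 1) = 2 * n + 1 + 1 by ring, alternatingWord_succ', alternatingWord_succ']
  simp

lemma prod_map_alternatingWord_two_mul {G : Type*} [Monoid G] (f : B → G) (i j : B) (n : ℕ) :
    ((alternatingWord i j (2 * n)).map f).prod = (f i * f j) ^ n := by
  induction n with
  | zero => simp [alternatingWord]
  | succ n ih =>
    rw [alternatingWord_two_mul_succ, List.map_cons, List.map_cons, List.prod_cons,
      List.prod_cons, ih, pow_succ', mul_assoc]

lemma wordProd_alternatingWord_two_mul (i j : B) (n : ℕ) :
    π (alternatingWord i j (2 * n)) = (s i * s j) ^ n :=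
  prod_map_alternatingWord_two_mul _ i j n

lemma rightInvSeq_alternatingWord_two_mul (i j : B) (n : ℕ) :
    ris (alternatingWord i j (2 * n)) =
      ((List.range (2 * n)).map fun r => s j * (s i * s j) ^ r).reverse := by
  have hsemi : ∀ k : ℕ, s j * (s i * s j) ^ k = ((s i * s j) ^ k)⁻¹ * s j := by
    intro k
    rw [← inv_pow]
    exact SemiconjBy.pow_right (by simp [SemiconjBy, mul_assoc]) k
  induction n with
  | zero => simp [alternatingWord]
  | succ n ih =>
    rw [alternatingWord_two_mul_succ, show 2 * (n + 1) = 2 * n + 1 + 1 by ring, List.range_succ,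
      List.range_succ]
    simp only [rightInvSeq, wordProd_cons, ih,
      wordProd_alternatingWord_two_mul, List.map_append, List.reverse_append]
    have h₁ : (s j * (s i * s j) ^ n)⁻¹ * s i * (s j * (s i * s j) ^ n) =
        s j * (s i * s j) ^ (2 * n + 1) := by
      calc _ = ((s i * s j) ^ n)⁻¹ * s j * (s i * s j) ^ (n + 1) := by
            simp only [mul_inv_rev, inv_simple, pow_succ', mul_assoc]
        _ = _ := by rw [← hsemi, mul_assoc, ← pow_add, two_mul, add_assoc]
    have h₂ : ((s i * s j) ^ n)⁻¹ * s j * (s i * s j) ^ n = s j * (s i * s j) ^ (2 * n) := by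
      rw [← hsemi, mul_assoc, ← pow_add, two_mul]
    rw [h₁, h₂]
    simp

/-- The reflections `s j (s i s j)ʳ` crossed by `(i j)^{m_ij}` have period `m_ij` in `r`. -/
lemma even_count_rightInvSeq_alternatingWord (i j : B) (u : W) :
    Even ((ris (alternatingWord i j (2 * M i j))).count u) := by
  have hperiod :
      (fun r => s j * (s i * s j) ^ r) ∘ (M i j + ·) = fun r => s j * (s i * s j) ^ r := by
    ext r
    simp [pow_add, cs.simple_mul_simple_pow]
  rw [rightInvSeq_alternatingWord_two_mul, List.count_reverse, two_mul, List.range_add,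
    List.map_append, List.map_map, hperiod, List.count_append]
  exact Even.add_self _

theorem isLiftable_reflParityPerm : M.IsLiftable cs.reflParityPerm := by
  intro i j
  rw [← prod_map_alternatingWord_two_mul]
  ext p
  · simp [prod_map_reflParityPerm, wordProd_alternatingWord_two_mul, cs.simple_mul_simple_pow]
  · simp [prod_map_reflParityPerm,
      ZMod.natCast_eq_zero_iff_even.mpr (cs.even_count_rightInvSeq_alternatingWord i j _)]

noncomputable def reflParityRep : W →* Equiv.Perm (W × ZMod 2) :=
  cs.lift ⟨cs.reflParityPerm, cs.isLiftable_reflParityPerm⟩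

noncomputable def reflParity (w t : W) : ZMod 2 := (cs.reflParityRep w (t, 0)).2

lemma reflParityRep_wordProd (ω : List B) :
    cs.reflParityRep (π ω) = (ω.map cs.reflParityPerm).prod := by
  rw [wordProd, map_list_prod, List.map_map]
  congr 1
  exact List.map_congr_left fun i _ => cs.lift_apply_simple _ i

lemma reflParity_wordProd (ω : List B) (t : W) :
    cs.reflParity (π ω) t = (ris ω).count t := by
  simp [reflParity, reflParityRep_wordProd, prod_map_reflParityPerm]

lemma reflParityRep_apply (w : W) (p : W × ZMod 2) :
    cs.reflParityRep w p = (w * p.1 * w⁻¹, p.2 + cs.reflParity w p.1) := by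
  obtain ⟨ω, rfl⟩ := cs.wordProd_surjective w
  simp [reflParityRep_wordProd, prod_map_reflParityPerm, reflParity_wordProd]

lemma reflParity_mul (v w t : W) :
    cs.reflParity (v * w) t = cs.reflParity w t + cs.reflParity v (w * t * w⁻¹) := by
  rw [reflParity, map_mul, Equiv.Perm.mul_apply, reflParityRep_apply, reflParityRep_apply,
    zero_add]

lemma reflParity_one (t : W) : cs.reflParity 1 t = 0 := by
  simpa using cs.reflParity_wordProd [] t

lemma reflParity_simple_simple (i : B) : cs.reflParity (s i) (s i) = 1 := by
  simpa using cs.reflParity_wordProd [i] (s i)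

lemma reflParity_self_of_isReflection {t : W} (ht : cs.IsReflection t) :
    cs.reflParity t t = 1 := by
  obtain ⟨w, i, rfl⟩ := ht
  have h₁ := cs.reflParity_mul (w * s i) w⁻¹ (w * s i * w⁻¹)
  have h₂ := cs.reflParity_mul w (s i) (s i)
  have h₃ := cs.reflParity_mul w w⁻¹ (w * s i * w⁻¹)
  have hconj : w⁻¹ * (w * s i * w⁻¹) * w = s i := by group
  simp only [inv_inv, simple_mul_simple_cancel_right, mul_inv_cancel, reflParity_one,
    reflParity_simple_simple, inv_simple, hconj] at h₁ h₂ h₃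
  linear_combination h₁ + h₂ - h₃

/-- The strong exchange condition, for words that need not be reduced. -/
theorem mem_rightInvSeq_of_length_mul_lt {ω : List B} {t : W} (ht : cs.IsReflection t)
    (hlt : ℓ (π ω * t) < ℓ (π ω)) : t ∈ ris ω := by
  have hcount : ∀ {ψ : List B}, cs.reflParity (π ψ) t ≠ 0 → t ∈ ris ψ := fun {ψ} h =>
    List.count_pos_iff.mp (Nat.pos_of_ne_zero fun h₀ => h (by rw [reflParity_wordProd, h₀,
      Nat.cast_zero]))
  have hwt : cs.reflParity (π ω * t) t = 0 := by
    by_contra hne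
    obtain ⟨ψ, hψ, hψw⟩ := cs.exists_isReduced (π ω * t)
    have hinv := (cs.isRightInversion_of_mem_rightInvSeq hψ (hcount (hψw ▸ hne))).2
    rw [← hψw, mul_assoc, ht.mul_self, mul_one] at hinv
    omega
  apply hcount
  have := cs.reflParity_mul (π ω * t) t t
  rw [mul_assoc, ht.mul_self, mul_one, one_mul, ht.inv,
    cs.reflParity_self_of_isReflection ht, hwt, add_zero] at this
  simp [this]


/-- The deletion condition. -/
theorem exists_isReduced_sublist (ω : List B) :
    ∃ ψ, ψ.Sublist ω ∧ cs.IsReduced ψ ∧ π ψ = π ω := by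
  induction ω using List.reverseRecOn with
  | nil => exact ⟨[], List.Sublist.refl _, by simp [IsReduced], rfl⟩
  | append_singleton ω c ih =>
    obtain ⟨ψ, hsub, hψ, hψω⟩ := ih
    rw [wordProd_append, wordProd_singleton, ← hψω]
    rcases cs.length_mul_simple (π ψ) c with h | h
    · refine ⟨ψ ++ [c], hsub.append_right [c], ?_, by rw [wordProd_append, wordProd_singleton]⟩
      rw [IsReduced, wordProd_append, wordProd_singleton, h, hψ, List.length_append,
        List.length_singleton]
    · obtain ⟨k, hk, hget⟩ := List.getElem_of_mem
        (cs.mem_rightInvSeq_of_length_mul_lt (ω := ψ) (cs.isReflection_simple c) (by omega))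
      have herase : π (ψ.eraseIdx k) = π ψ * s c := by
        rw [← wordProd_mul_getD_rightInvSeq, List.getD_eq_getElem _ _ hk, hget]
      refine ⟨ψ.eraseIdx k, (ψ.eraseIdx_sublist k).trans (hsub.trans (ω.sublist_append_left _)),
        ?_, herase⟩
      rw [length_rightInvSeq] at hk
      rw [IsReduced, herase, List.length_eraseIdx_of_lt hk, ← hψ]
      omega

lemma mem_closure_simple_image_iff {J : Set B} {w : W} :
    w ∈ Subgroup.closure (cs.simple '' J) ↔ ∃ ω : List B, (∀ i ∈ ω, i ∈ J) ∧ π ω = w := by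
  constructor
  · intro hw
    induction hw using Subgroup.closure_induction with
    | mem _ hw =>
      obtain ⟨i, hi, rfl⟩ := hw
      exact ⟨[i], by simpa using hi, wordProd_singleton cs i⟩
    | one => exact ⟨[], by simp, wordProd_nil cs⟩
    | mul _ _ _ _ ihu ihv =>
      obtain ⟨ω, hω, rfl⟩ := ihu
      obtain ⟨ψ, hψ, rfl⟩ := ihv
      exact ⟨ω ++ ψ, by simpa using fun i h => h.elim (hω i) (hψ i), wordProd_append cs ω ψ⟩
    | inv _ _ ih =>
      obtain ⟨ω, hω, rfl⟩ := ih
      exact ⟨ω.reverse, by simpa using hω, wordProd_reverse cs ω⟩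
  · rintro ⟨ω, hω, rfl⟩
    induction ω with
    | nil => exact one_mem _
    | cons i ω ih =>
      rw [wordProd_cons]
      exact mul_mem (Subgroup.subset_closure ⟨i, hω i List.mem_cons_self, rfl⟩)
        (ih fun j hj => hω j (List.mem_cons_of_mem i hj))

lemma rightInvSeq_subset_closure {J : Set B} {ω : List B} (hω : ∀ i ∈ ω, i ∈ J) :
    ∀ t ∈ ris ω, t ∈ Subgroup.closure (cs.simple '' J) := by
  induction ω with
  | nil => simp
  | cons i ω ih =>
    have hω' : ∀ j ∈ ω, j ∈ J := fun j hj => hω j (List.mem_cons_of_mem i hj)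
    have hπ := cs.mem_closure_simple_image_iff.mpr ⟨ω, hω', rfl⟩
    rintro t (_ | ⟨_, ht⟩)
    · exact mul_mem (mul_mem (inv_mem hπ)
        (Subgroup.subset_closure ⟨i, hω i List.mem_cons_self, rfl⟩)) hπ
    · exact ih hω' t ht

lemma simple_mem_closure_simple_image_iff {J : Set B} {i : B} :
    s i ∈ Subgroup.closure (cs.simple '' J) ↔ i ∈ J := by
  refine ⟨fun h => ?_, fun h => Subgroup.subset_closure ⟨i, h, rfl⟩⟩
  obtain ⟨ω, hω, hωi⟩ := cs.mem_closure_simple_image_iff.mp h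
  obtain ⟨ψ, hsub, hψ, hψω⟩ := cs.exists_isReduced_sublist ω
  have hlen : ψ.length = 1 := by rw [← hψ, hψω, hωi, length_simple]
  obtain ⟨j, rfl⟩ := List.length_eq_one_iff.mp hlen
  obtain rfl : j = i := cs.simple_injective (by simpa [hωi] using hψω)
  exact hω j (hsub.subset (List.mem_singleton_self j))

theorem mem_of_isReduced_of_wordProd_mem_closure {J : Set B} {ω : List B}
    (hω : cs.IsReduced ω) (hJ : π ω ∈ Subgroup.closure (cs.simple '' J)) : ∀ i ∈ ω, i ∈ J := by
  induction ω using List.reverseRecOn with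
  | nil => simp
  | append_singleton ω c ih =>
    have hω' : cs.IsReduced ω := by simpa using hω.take ω.length
    have hπ : π (ω ++ [c]) * s c = π ω := by simp [wordProd_append]
    obtain ⟨ψ, hψJ, hψ⟩ := cs.mem_closure_simple_image_iff.mp hJ
    have hc : s c ∈ Subgroup.closure (cs.simple '' J) := by
      refine cs.rightInvSeq_subset_closure hψJ _ (cs.mem_rightInvSeq_of_length_mul_lt
        (cs.isReflection_simple c) ?_)
      rw [hψ, hπ, hω', hω, List.length_append, List.length_singleton]
      omega
    intro i hi
    rcases List.mem_append.mp hi with hi | hi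
    · exact ih hω' (hπ ▸ mul_mem hJ hc) i hi
    · exact List.mem_singleton.mp hi ▸ cs.simple_mem_closure_simple_image_iff.mp hc

theorem support_subset_iff_mem_closure {J : Set B} {w : W} :
    cs.support w ⊆ J ↔ w ∈ Subgroup.closure (cs.simple '' J) := by
  constructor
  · intro h
    obtain ⟨ω, hω, rfl⟩ := cs.exists_isReduced w
    exact cs.mem_closure_simple_image_iff.mpr ⟨ω, fun i hi => h ⟨ω, hω, rfl, hi⟩, rfl⟩
  · rintro hw i ⟨ω, hω, rfl, hi⟩
    exact cs.mem_of_isReduced_of_wordProd_mem_closure hω hw i hi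

end CoxeterSystem

theorem statement4_general (cs : CoxeterSystem M W) (J : Set B) (x t : W) :
    (fun w => w * t) '' cs.coset J x = cs.coset J x ↔
      cs.support (x * t * x⁻¹) ⊆ J := by
  rw [coset, Subgroup.image_mul_right_image_mul_right_eq_iff, cs.support_subset_iff_mem_closure]

/-- A face `W_J x` of the Coxeter complex lies in the fixed hyperplane `H_t` of a reflection
`t` (meaning `W_J x t = W_J x`) if and only if the support of `x t x⁻¹` is contained in `J`. -/
theorem statement4 (cs : CoxeterSystem M W) [Finite W] (J : Set B) (x t : W)
    (ht : cs.IsReflection t) :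
    (fun w => w * t) '' cs.coset J x = cs.coset J x ↔
      cs.support (x * t * x⁻¹) ⊆ J :=
  statement4_general cs J x t
end

section
/- Let W act on R^n as a finite reflection group, x ∈ W, and t a reflection with fixed hyperplane H_t. Identify chambers of the reflection arrangement with elements of W via the simply transitive action. Then the intersection of the closed chamber corresponding to x with H_t equals the closed face of the Coxeter complex corresponding to the coset W_{J(xtx^{-1})} x, where J(xtx^{-1}) is the support of xtx^{-1}. -/
open CoxeterSystem

variable {B W : Type*} [Group W] {M : CoxeterMatrix B}

/-! `F = W_J x` lies in `H_t` exactly when `x t x⁻¹ ∈ W_J`, so the only real content is that the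
support of an element of a standard parabolic subgroup `W_J` consists of indices `i` with
`s i ∈ W_J`: then `K = {i | s i ∈ W_J}` gives `W_K = W_J` and `J(x t x⁻¹) ⊆ K`.

Peeling off left descents of a reduced word reduces this to: a right descent `s i` of `π τ`
occurs in the right inversion sequence of *every* word `τ` (apply it to a word `τ` over `J`).
This is the exchange property, proved with Tits' action of `W` on `W × ZMod 2`, in which `s i`
sends `(t, ε)` to `(s i t s i, ε + [t = s i])`; by construction `π τ` adds to `ε` the parity of
the number of occurrences of `t` in the right inversion sequence of `τ`, which therefore depends
only on `π τ`. -/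

theorem mul_mul_inv_eq_iff_eq_inv_mul_mul {G : Type*} [Group G] (g t c : G) :
    g * t * g⁻¹ = c ↔ t = g⁻¹ * c * g := by
  constructor <;> rintro rfl <;> group

namespace CoxeterSystem

variable (cs : CoxeterSystem M W)

local prefix:100 "s" => cs.simple
local prefix:100 "π" => cs.wordProd
local prefix:100 "ris" => cs.rightInvSeq

section SignedConj

variable [DecidableEq W]

def signedConj (i : B) : Function.End (W × ZMod 2) :=
  fun p => (s i * p.1 * (s i)⁻¹, p.2 + if p.1 = s i then 1 else 0)

theorem signedConj_mul_pow (i j : B) (m : ℕ) (t : W) (e : ZMod 2) :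
    ((cs.signedConj i * cs.signedConj j) ^ m) (t, e) =
      ((s i * s j) ^ m * t * ((s i * s j) ^ m)⁻¹,
        e + ∑ k ∈ Finset.range (2 * m), if t = (s j * s i) ^ k * s j then 1 else 0) := by
  induction m generalizing t e with
  | zero =>
    simp only [pow_zero, one_mul, inv_one, mul_one, mul_zero, Finset.range_zero, Finset.sum_empty,
      add_zero]
    rfl
  | succ m ih =>
    have hstep (k : ℕ) : s i * (s j * t * (s j)⁻¹) * (s i)⁻¹ = (s j * s i) ^ k * s j ↔
        t = (s j * s i) ^ (k + 1 + 1) * s j := by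
      rw [mul_mul_inv_eq_iff_eq_inv_mul_mul, mul_mul_inv_eq_iff_eq_inv_mul_mul, inv_simple,
        inv_simple, pow_succ _ (k + 1), pow_succ']
      simp only [mul_assoc]
    rw [pow_succ]
    change ((cs.signedConj i * cs.signedConj j) ^ m) (cs.signedConj i (cs.signedConj j (t, e))) = _
    simp only [signedConj, ih, hstep]
    refine Prod.ext ?_ ?_
    · simp only [pow_succ, mul_inv_rev, inv_simple]
      group
    · rw [show 2 * (m + 1) = 2 * m + 1 + 1 by ring, Finset.sum_range_succ', Finset.sum_range_succ']
      simp only [mul_mul_inv_eq_iff_eq_inv_mul_mul]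
      simp only [inv_simple, pow_zero, zero_add, pow_one, one_mul]
      ring

theorem isLiftable_signedConj : M.IsLiftable cs.signedConj := by
  intro i j
  funext ⟨t, e⟩
  have hperiod (k : ℕ) : (s j * s i) ^ (M i j + k) * s j = (s j * s i) ^ k * s j := by
    rw [pow_add, simple_mul_simple_pow', one_mul]
  rw [signedConj_mul_pow, simple_mul_simple_pow, two_mul, Finset.sum_range_add]
  simp only [hperiod, CharTwo.add_self_eq_zero, one_mul, inv_one, mul_one, add_zero]
  rfl

def signedConjAction : W →* Function.End (W × ZMod 2) :=
  cs.lift ⟨cs.signedConj, cs.isLiftable_signedConj⟩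

theorem signedConjAction_mul_apply (u v : W) (p : W × ZMod 2) :
    cs.signedConjAction (u * v) p = cs.signedConjAction u (cs.signedConjAction v p) := by
  rw [map_mul]
  rfl

theorem signedConjAction_simple (i : B) : cs.signedConjAction (s i) = cs.signedConj i :=
  cs.lift_apply_simple cs.isLiftable_signedConj i

theorem signedConjAction_wordProd (ω : List B) (t : W) (e : ZMod 2) :
    cs.signedConjAction (π ω) (t, e) = (π ω * t * (π ω)⁻¹, e + (ris ω).count t) := by
  induction ω generalizing e with
  | nil =>
    simp only [wordProd_nil, map_one, one_mul, inv_one, mul_one, rightInvSeq_nil, List.count_nil,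
      Nat.cast_zero, add_zero]
    rfl
  | cons i ω ih =>
    rw [wordProd_cons, signedConjAction_mul_apply, ih, signedConjAction_simple]
    simp only [signedConj, rightInvSeq, List.count_cons, mul_mul_inv_eq_iff_eq_inv_mul_mul]
    refine Prod.ext (by group) ?_
    simp only [beq_iff_eq, @eq_comm _ t, Nat.cast_add, Nat.cast_ite, Nat.cast_one, Nat.cast_zero,
      add_assoc]

end SignedConj

theorem simple_mem_rightInvSeq_of_isRightDescent {ω : List B} {i : B}
    (h : cs.IsRightDescent (π ω) i) : s i ∈ ris ω := by
  classical
  obtain ⟨ω₀, hω₀, hω₀_eq⟩ := cs.exists_isReduced (π ω * s i)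
  have hω : π ω = π ω₀ * s i := by rw [← hω₀_eq, simple_mul_simple_cancel_right]
  have hnot : s i ∉ ris ω₀ := fun hmem => by
    have := (cs.isRightInversion_of_mem_rightInvSeq hω₀ hmem).2
    rw [← hω₀_eq, simple_mul_simple_cancel_right] at this
    exact lt_asymm h this
  have hcount : ((ris ω).count (s i) : ZMod 2) = 1 := by
    have := congrArg (fun w => (cs.signedConjAction w (s i, 0)).2) hω
    simpa [signedConjAction_mul_apply, signedConjAction_simple, signedConj,
      signedConjAction_wordProd, List.count_eq_zero.mpr hnot] using this
  by_contra hmem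
  simp [List.count_eq_zero.mpr hmem] at hcount

theorem wordProd_mem_closure {J : Set B} {τ : List B} (hτ : ∀ i ∈ τ, i ∈ J) :
    π τ ∈ Subgroup.closure (cs.simple '' J) := by
  refine Subgroup.list_prod_mem _ fun _ hx => ?_
  obtain ⟨i, hi, rfl⟩ := List.mem_map.mp hx
  exact Subgroup.subset_closure ⟨i, hτ i hi, rfl⟩

theorem exists_wordProd_eq_of_mem_closure {J : Set B} {w : W}
    (hw : w ∈ Subgroup.closure (cs.simple '' J)) : ∃ τ : List B, (∀ i ∈ τ, i ∈ J) ∧ π τ = w := by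
  induction hw using Subgroup.closure_induction with
  | mem _ hw =>
    obtain ⟨i, hi, rfl⟩ := hw
    exact ⟨[i], by simpa using hi, cs.wordProd_singleton i⟩
  | one => exact ⟨[], by simp, cs.wordProd_nil⟩
  | mul _ _ _ _ ihu ihv =>
    obtain ⟨τ, hτ, rfl⟩ := ihu
    obtain ⟨τ', hτ', rfl⟩ := ihv
    exact ⟨τ ++ τ', fun i hi => (List.mem_append.mp hi).elim (hτ i) (hτ' i),
      cs.wordProd_append τ τ'⟩
  | inv _ _ ih =>
    obtain ⟨τ, hτ, rfl⟩ := ih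
    exact ⟨τ.reverse, by simpa using hτ, cs.wordProd_reverse τ⟩

theorem mem_closure_of_mem_rightInvSeq {J : Set B} {τ : List B} (hτ : ∀ i ∈ τ, i ∈ J) {t : W}
    (ht : t ∈ ris τ) : t ∈ Subgroup.closure (cs.simple '' J) := by
  induction τ with
  | nil => simp [rightInvSeq] at ht
  | cons i τ ih =>
    rw [List.forall_mem_cons] at hτ
    rcases List.mem_cons.mp ht with rfl | ht
    · have hπ := cs.wordProd_mem_closure hτ.2
      exact mul_mem (mul_mem (inv_mem hπ) (Subgroup.subset_closure ⟨i, hτ.1, rfl⟩)) hπ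
    · exact ih hτ.2 ht

theorem simple_mem_closure_of_isRightDescent {J : Set B} {w : W} {i : B}
    (hw : w ∈ Subgroup.closure (cs.simple '' J)) (hi : cs.IsRightDescent w i) :
    s i ∈ Subgroup.closure (cs.simple '' J) := by
  obtain ⟨τ, hτ, rfl⟩ := cs.exists_wordProd_eq_of_mem_closure hw
  exact cs.mem_closure_of_mem_rightInvSeq hτ (cs.simple_mem_rightInvSeq_of_isRightDescent hi)

theorem simple_mem_closure_of_isLeftDescent {J : Set B} {w : W} {i : B}
    (hw : w ∈ Subgroup.closure (cs.simple '' J)) (hi : cs.IsLeftDescent w i) :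
    s i ∈ Subgroup.closure (cs.simple '' J) :=
  cs.simple_mem_closure_of_isRightDescent (inv_mem hw) (cs.isRightDescent_inv_iff.mpr hi)

theorem simple_mem_closure_of_mem_of_isReduced {J : Set B} {ω : List B} (hω : cs.IsReduced ω)
    (hπ : π ω ∈ Subgroup.closure (cs.simple '' J)) {i : B} (hi : i ∈ ω) :
    s i ∈ Subgroup.closure (cs.simple '' J) := by
  induction ω with
  | nil => cases hi
  | cons j ω ih =>
    have hdescent : cs.IsLeftDescent (π (j :: ω)) j := by
      have hlen : cs.length (π (j :: ω)) = ω.length + 1 := hω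
      have := cs.length_wordProd_le ω
      rw [IsLeftDescent, wordProd_cons, simple_mul_simple_cancel_left, ← wordProd_cons, hlen]
      omega
    have hj := cs.simple_mem_closure_of_isLeftDescent hπ hdescent
    rcases List.mem_cons.mp hi with rfl | hi
    · exact hj
    · refine ih (hω.drop 1) ?_ hi
      simpa [wordProd_cons, simple_mul_simple_cancel_left] using mul_mem hj hπ

theorem support_subset_of_mem_closure {J : Set B} {w : W}
    (hw : w ∈ Subgroup.closure (cs.simple '' J)) :
    cs.support w ⊆ {i | s i ∈ Subgroup.closure (cs.simple '' J)} := by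
  rintro i ⟨ω, hω, rfl, hi⟩
  exact cs.simple_mem_closure_of_mem_of_isReduced hω hw hi

theorem mem_closure_of_support_subset {J : Set B} {w : W} (h : cs.support w ⊆ J) :
    w ∈ Subgroup.closure (cs.simple '' J) := by
  obtain ⟨ω, hω, rfl⟩ := cs.exists_isReduced w
  exact cs.wordProd_mem_closure fun i hi => h ⟨ω, hω, rfl, hi⟩

theorem closure_simple_image_setOf_simple_mem (J : Set B) :
    Subgroup.closure (cs.simple '' {i | s i ∈ Subgroup.closure (cs.simple '' J)}) =
      Subgroup.closure (cs.simple '' J) :=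
  le_antisymm (Subgroup.closure_le _ |>.mpr (by rintro _ ⟨i, hi, rfl⟩; exact hi))
    (Subgroup.closure_mono (Set.image_mono fun i hi => Subgroup.subset_closure ⟨i, hi, rfl⟩))

theorem mem_coset_iff {J : Set B} {x w : W} :
    x ∈ cs.coset J w ↔ x * w⁻¹ ∈ Subgroup.closure (cs.simple '' J) := by
  rw [coset, Set.image_mul_right]
  rfl

theorem mem_coset_self (J : Set B) (x : W) : x ∈ cs.coset J x := by
  rw [mem_coset_iff, mul_inv_cancel]
  exact one_mem _

theorem coset_eq_of_mem {J : Set B} {x w : W} (h : x ∈ cs.coset J w) :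
    cs.coset J x = cs.coset J w := by
  rw [mem_coset_iff] at h
  ext g
  rw [mem_coset_iff, mem_coset_iff, ← mul_mem_cancel_right h, mul_assoc, inv_mul_cancel_left]

theorem coset_setOf_simple_mem (J : Set B) (x : W) :
    cs.coset {i | s i ∈ Subgroup.closure (cs.simple '' J)} x = cs.coset J x := by
  rw [coset, coset, closure_simple_image_setOf_simple_mem]

end CoxeterSystem

theorem statement6_general (cs : CoxeterSystem M W) (x t : W) :
    {F : Set W | ∃ J : Set B, F = cs.coset J x} ∩
      {F : Set W | ∃ (J : Set B) (w : W), F = cs.coset J w ∧ cs.support (w * t * w⁻¹) ⊆ J}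
    = {F : Set W | ∃ K : Set B, cs.support (x * t * x⁻¹) ⊆ K ∧ F = cs.coset K x} := by
  ext F
  constructor
  · rintro ⟨⟨J, rfl⟩, J', w, hF, hsupport⟩
    have hx : x ∈ cs.coset J' w := hF ▸ cs.mem_coset_self J x
    refine ⟨{i | cs.simple i ∈ Subgroup.closure (cs.simple '' J')}, ?_, ?_⟩
    · apply cs.support_subset_of_mem_closure
      have hu := cs.mem_coset_iff.mp hx
      have := mul_mem (mul_mem hu (cs.mem_closure_of_support_subset hsupport)) (inv_mem hu)
      convert this using 1
      group
    · rw [hF, cs.coset_setOf_simple_mem, cs.coset_eq_of_mem hx]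
  · rintro ⟨K, hK, rfl⟩
    exact ⟨⟨K, rfl⟩, K, x, rfl, hK⟩

/-- In the Coxeter complex model of the reflection arrangement of a finite Coxeter group `W`
(where faces are the cosets `W_J x`, the closure of the chamber `C_x` consists of the faces
`W_J x` for `J ⊆ S`, the hyperplane `H_t` consists of the faces `W_J w` with
`support (w t w⁻¹) ⊆ J`, and the closure of the face `W_J x` consists of the faces `W_K x` for
`J ⊆ K`): the intersection of the closed chamber `C_x` with `H_t` is the closed face
corresponding to the coset `W_{J(x t x⁻¹)} x`. -/
theorem statement6 (cs : CoxeterSystem M W) [Finite W] (x t : W)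
    (ht : cs.IsReflection t) :
    {F : Set W | ∃ J : Set B, F = cs.coset J x} ∩
      {F : Set W | ∃ (J : Set B) (w : W), F = cs.coset J w ∧ cs.support (w * t * w⁻¹) ⊆ J}
    = {F : Set W | ∃ K : Set B, cs.support (x * t * x⁻¹) ⊆ K ∧ F = cs.coset K x} :=
  statement6_general cs x t
end
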